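/- arXiv:1610.04115 — 5 statements merged into one kernel-verified Lean document; each statement's English description precedes it below -/
import Mathlib

section
/- With the conflict graph G defined on associations C × U × B × Z via conditions CC1–CC3, the maximum over feasible schedules S of the total benefit ∑_{a∈S} π(a) equals the maximum weight of an independent set of size |C|·|B|·|Z| in G, where vertex v has weight π(v). In particular, a schedule S* is an optimal solution of the scheduling problem if and only if S* is a maximum-weight independent set among independent sets of size |C|·|B|·|Z|. -/
open Finset

section
variable {C U B Z : Type*} [Fintype C] [Fintype U] [Fintype B] [Fintype Z]

def cloud (a : C × U × B × Z) : C := a.1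
def user (a : C × U × B × Z) : U := a.2.1
def bs (a : C × U × B × Z) : B := a.2.2.1
def pz (a : C × U × B × Z) : Z := a.2.2.2

/-- Adjacency in the conflict graph: CC1 (same user, different clouds), or
CC2 (same (cloud, BS, PZ) triple), or CC3 (same user, same PZ). -/
def Conflict (v v' : C × U × B × Z) : Prop :=
  (user v = user v' ∧ cloud v ≠ cloud v')
  ∨ (cloud v = cloud v' ∧ bs v = bs v' ∧ pz v = pz v')
  ∨ (user v = user v' ∧ pz v = pz v')

/-- `S` is an independent set of the conflict graph. -/
def IndepSet (S : Finset (C × U × B × Z)) : Prop :=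
  ∀ v ∈ S, ∀ v' ∈ S, v ≠ v' → ¬ Conflict v v'

/-- Feasibility of a hybrid schedule. -/
def Feasible (S : Finset (C × U × B × Z)) : Prop :=
  (∀ a ∈ S, ∀ a' ∈ S, a ≠ a' → ¬ (user a = user a' ∧ cloud a ≠ cloud a'))
  ∧ (∀ c : C, ∀ b : B, ∀ z : Z, ∃! u : U, (c, u, b, z) ∈ S)
  ∧ (∀ a ∈ S, ∀ a' ∈ S, a ≠ a' → ¬ (user a = user a' ∧ pz a = pz a'))

set_option linter.unusedSectionVars false in
lemma quad_ext {a a' : C × U × B × Z} (h1 : a.1 = a'.1) (h2 : a.2.1 = a'.2.1)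
    (h3 : a.2.2.1 = a'.2.2.1) (h4 : a.2.2.2 = a'.2.2.2) : a = a' := by
  obtain ⟨c, u, b, z⟩ := a; obtain ⟨c', u', b', z'⟩ := a'
  simp_all

lemma feasible_iff_indep_card (S : Finset (C × U × B × Z)) :
    Feasible S ↔ IndepSet S ∧
      S.card = Fintype.card C * Fintype.card B * Fintype.card Z := by
  classical
  set f : C × U × B × Z → C × B × Z := fun a => (a.1, a.2.2.1, a.2.2.2) with hf
  have fc : ∀ a : C × U × B × Z, f a = (a.1, a.2.2.1, a.2.2.2) := fun _ => rfl
  constructor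
  · rintro ⟨h1, h2, h3⟩
    have key : ∀ a ∈ S, ∀ a' ∈ S, f a = f a' → a = a' := by
      intro a ha a' ha' hfa
      obtain ⟨hc, hb, hz⟩ : a.1 = a'.1 ∧ a.2.2.1 = a'.2.2.1 ∧ a.2.2.2 = a'.2.2.2 := by
        rw [fc, fc, Prod.mk.injEq, Prod.mk.injEq] at hfa; tauto
      obtain ⟨u, hu, huniq⟩ := h2 a.1 a.2.2.1 a.2.2.2
      have e1 : a.2.1 = u := huniq a.2.1 ha
      have e2 : a'.2.1 = u := by
        apply huniq a'.2.1
        have : (a.1, a'.2.1, a.2.2.1, a.2.2.2) = a' := quad_ext hc rfl hb hz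
        rwa [this]
      exact quad_ext hc (e1.trans e2.symm) hb hz
    constructor
    · intro v hv v' hv' hne conf
      rcases conf with h | h | h
      · exact h1 v hv v' hv' hne h
      · exact hne (key v hv v' hv' (by rw [fc, fc]; exact Prod.ext h.1 (Prod.ext h.2.1 h.2.2)))
      · exact h3 v hv v' hv' hne h
    · have himg : S.image f = Finset.univ := by
        apply Finset.eq_univ_of_forall
        rintro ⟨c, b, z⟩
        obtain ⟨u, hu, -⟩ := h2 c b z
        exact Finset.mem_image.mpr ⟨(c, u, b, z), hu, rfl⟩
      have := Finset.card_image_of_injOn (f := f) (s := S) key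
      rw [himg, Finset.card_univ] at this
      simp [Fintype.card_prod, mul_assoc] at this ⊢
      omega
  · rintro ⟨hind, hcard⟩
    have hinj : Set.InjOn f S := by
      intro a ha a' ha' hfa
      by_contra hne
      obtain ⟨hc, hb, hz⟩ : a.1 = a'.1 ∧ a.2.2.1 = a'.2.2.1 ∧ a.2.2.2 = a'.2.2.2 := by
        rw [fc, fc, Prod.mk.injEq, Prod.mk.injEq] at hfa; tauto
      exact hind a ha a' ha' hne (Or.inr (Or.inl ⟨hc, hb, hz⟩))
    have himg : S.image f = Finset.univ := by
      apply Finset.eq_univ_of_card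
      rw [Finset.card_image_of_injOn hinj, hcard,
        Fintype.card_prod, Fintype.card_prod, mul_assoc]
    refine ⟨?_, ?_, ?_⟩
    · intro a ha a' ha' hne h; exact hind a ha a' ha' hne (Or.inl h)
    · intro c b z
      have : (c, b, z) ∈ S.image f := by rw [himg]; exact Finset.mem_univ _
      obtain ⟨a, ha, hfa⟩ := Finset.mem_image.mp this
      obtain ⟨hc, hb, hz⟩ : a.1 = c ∧ a.2.2.1 = b ∧ a.2.2.2 = z := by
        rw [fc, Prod.mk.injEq, Prod.mk.injEq] at hfa; tauto
      refine ⟨a.2.1, ?_, ?_⟩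
      · have : (c, a.2.1, b, z) = a := (quad_ext hc.symm rfl hb.symm hz.symm)
        show (c, a.2.1, b, z) ∈ S
        rw [this]; exact ha
      · intro u' hu'
        have hmem : ((c, u', b, z) : C × U × B × Z) ∈ S := hu'
        by_contra hne
        have hne2 : ((c, u', b, z) : C × U × B × Z) ≠ a := by
          intro h; exact hne (by rw [← h])
        exact hind _ hmem a ha hne2 (Or.inr (Or.inl ⟨hc.symm, hb.symm, hz.symm⟩))
    · intro a ha a' ha' hne h; exact hind a ha a' ha' hne (Or.inr (Or.inr h))

theorem optimum_feasible_eq_optimum_indep (π : C × U × B × Z → ℝ)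
    (hne : ∃ S : Finset (C × U × B × Z), Feasible S) :
    (∀ m : ℝ,
      IsGreatest {x : ℝ | ∃ S : Finset (C × U × B × Z), Feasible S ∧ x = ∑ a ∈ S, π a} m ↔
      IsGreatest {x : ℝ | ∃ S : Finset (C × U × B × Z), IndepSet S ∧
        S.card = Fintype.card C * Fintype.card B * Fintype.card Z ∧ x = ∑ a ∈ S, π a} m)
    ∧ (∀ Sstar : Finset (C × U × B × Z),
      (Feasible Sstar ∧ ∀ S : Finset (C × U × B × Z), Feasible S →
          ∑ a ∈ S, π a ≤ ∑ a ∈ Sstar, π a) ↔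
      (IndepSet Sstar ∧ Sstar.card = Fintype.card C * Fintype.card B * Fintype.card Z ∧
        ∀ S : Finset (C × U × B × Z), IndepSet S →
          S.card = Fintype.card C * Fintype.card B * Fintype.card Z →
          ∑ a ∈ S, π a ≤ ∑ a ∈ Sstar, π a)) := by
  have hset : {x : ℝ | ∃ S : Finset (C × U × B × Z), Feasible S ∧ x = ∑ a ∈ S, π a} =
      {x : ℝ | ∃ S : Finset (C × U × B × Z), IndepSet S ∧
        S.card = Fintype.card C * Fintype.card B * Fintype.card Z ∧ x = ∑ a ∈ S, π a} := by
    ext x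
    simp only [Set.mem_setOf_eq, feasible_iff_indep_card]
    tauto
  constructor
  · intro m; rw [hset]
  · intro Sstar
    rw [feasible_iff_indep_card]
    constructor
    · rintro ⟨⟨hi, hc⟩, hmax⟩
      exact ⟨hi, hc, fun S hS hSc => hmax S ((feasible_iff_indep_card S).mpr ⟨hS, hSc⟩)⟩
    · rintro ⟨hi, hc, hmax⟩
      refine ⟨⟨hi, hc⟩, fun S hS => ?_⟩
      obtain ⟨h1, h2⟩ := (feasible_iff_indep_card S).mp hS
      exact hmax S h1 h2


end
end

section
/- Suppose for each cloud c the optimal schedule assigns user set U_c^s ⊆ U, with U_c^s pairwise disjoint across clouds, and let I_c be a maximum-weight independent set of size |B|·|Z| in the local conflict graph G_c(U_c^s). Then S = ⋃_c I_c is a maximum-weight independent set of size |C|·|B|·|Z| in the global conflict graph; i.e., ∑_{v∈S} w(v) = max over global feasible schedules of total weight, and in particular the global optimum equals ∑_{c∈C} max_{I_c ∈ I_c} ∑_{v∈I_c} w(v). -/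
open Finset

section
variable {C U B Z : Type*} [Fintype C] [Fintype U] [Fintype B] [Fintype Z]

theorem union_of_local_optima_is_global_optimum
    [DecidableEq C] [DecidableEq U] [DecidableEq B] [DecidableEq Z]
    (w : C × U × B × Z → ℝ) (Sstar : Finset (C × U × B × Z))
    (hind : IndepSet Sstar)
    (hcard : Sstar.card = Fintype.card C * Fintype.card B * Fintype.card Z)
    (hopt : ∀ S : Finset (C × U × B × Z), IndepSet S →
      S.card = Fintype.card C * Fintype.card B * Fintype.card Z →
      ∑ v ∈ S, w v ≤ ∑ v ∈ Sstar, w v)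
    (I : C → Finset (C × U × B × Z))
    (hIc : ∀ c : C, ∀ v ∈ I c, cloud v = c ∧
      user v ∈ (Sstar.filter (fun a => cloud a = c)).image user)
    (hIind : ∀ c : C, IndepSet (I c))
    (hIcard : ∀ c : C, (I c).card = Fintype.card B * Fintype.card Z)
    (hIopt : ∀ c : C, ∀ T : Finset (C × U × B × Z), IndepSet T →
      T.card = Fintype.card B * Fintype.card Z →
      (∀ v ∈ T, cloud v = c ∧
        user v ∈ (Sstar.filter (fun a => cloud a = c)).image user) →
      ∑ v ∈ T, w v ≤ ∑ v ∈ I c, w v) :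
    IndepSet (Finset.univ.biUnion I) ∧
    (Finset.univ.biUnion I).card =
      Fintype.card C * Fintype.card B * Fintype.card Z ∧
    ∑ v ∈ Finset.univ.biUnion I, w v = ∑ v ∈ Sstar, w v ∧
    (∀ T : Finset (C × U × B × Z), IndepSet T →
      T.card = Fintype.card C * Fintype.card B * Fintype.card Z →
      ∑ v ∈ T, w v ≤ ∑ v ∈ Finset.univ.biUnion I, w v) := by
  classical
  -- users in different clouds' local sets are distinct
  have huser : ∀ c c' : C, c ≠ c' → ∀ v ∈ I c, ∀ v' ∈ I c', user v ≠ user v' := by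
    intro c c' hcc v hv v' hv' heq
    obtain ⟨hc, hu⟩ := hIc c v hv
    obtain ⟨hc', hu'⟩ := hIc c' v' hv'
    obtain ⟨a, ha, hua⟩ := Finset.mem_image.mp hu
    obtain ⟨a', ha', hua'⟩ := Finset.mem_image.mp hu'
    rw [Finset.mem_filter] at ha ha'
    have hane : a ≠ a' := by
      intro h; apply hcc; rw [← ha.2, h, ha'.2]
    exact hind a ha.1 a' ha'.1 hane
      (Or.inl ⟨hua.trans (heq.trans hua'.symm), by rw [ha.2, ha'.2]; exact hcc⟩)
  have hUind : IndepSet (Finset.univ.biUnion I) := by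
    intro v hv v' hv' hne hconf
    rw [Finset.mem_biUnion] at hv hv'
    obtain ⟨c, -, hv⟩ := hv
    obtain ⟨c', -, hv'⟩ := hv'
    by_cases h : c = c'
    · subst h; exact hIind c v hv v' hv' hne hconf
    · rcases hconf with ⟨h1, _⟩ | ⟨h1, _, _⟩ | ⟨h1, _⟩
      · exact huser c c' h v hv v' hv' h1
      · exact h (((hIc c v hv).1.symm.trans h1).trans (hIc c' v' hv').1)
      · exact huser c c' h v hv v' hv' h1
  have hdisj : ∀ c ∈ (Finset.univ : Finset C), ∀ c' ∈ (Finset.univ : Finset C),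
      c ≠ c' → Disjoint (I c) (I c') := by
    intro c _ c' _ h
    rw [Finset.disjoint_left]
    intro v hv hv'
    exact h ((hIc c v hv).1.symm.trans (hIc c' v hv').1)
  have hUcard : (Finset.univ.biUnion I).card =
      Fintype.card C * Fintype.card B * Fintype.card Z := by
    rw [Finset.card_biUnion hdisj]
    simp only [hIcard, Finset.sum_const, Finset.card_univ, smul_eq_mul, mul_assoc]
  have heq : ∑ v ∈ Finset.univ.biUnion I, w v = ∑ v ∈ Sstar, w v := by
    have hle1 : ∑ v ∈ Finset.univ.biUnion I, w v ≤ ∑ v ∈ Sstar, w v :=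
      hopt _ hUind hUcard
    -- fibers of Sstar
    set F : C → Finset (C × U × B × Z) := fun c => Sstar.filter (fun a => cloud a = c) with hF
    have hFind : ∀ c, IndepSet (F c) := fun c v hv v' hv' hne =>
      hind v (Finset.mem_filter.mp hv).1 v' (Finset.mem_filter.mp hv').1 hne
    have hFle : ∀ c, (F c).card ≤ Fintype.card B * Fintype.card Z := by
      intro c
      have : (F c).card ≤ (Finset.univ : Finset (B × Z)).card := by
        apply Finset.card_le_card_of_injOn (fun v => (bs v, pz v))
          (fun _ _ => Finset.mem_univ _)
        intro v hv v' hv' hbz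
        by_contra hne
        have h1 := Finset.mem_filter.mp hv
        have h2 := Finset.mem_filter.mp hv'
        exact hind v h1.1 v' h2.1 hne
          (Or.inr (Or.inl ⟨h1.2.trans h2.2.symm,
            congrArg Prod.fst hbz, congrArg Prod.snd hbz⟩))
      simpa [Fintype.card_prod] using this
    have hFsum : ∑ c : C, (F c).card =
        Fintype.card C * Fintype.card B * Fintype.card Z := by
      rw [← hcard]
      exact (Finset.card_eq_sum_card_fiberwise (fun v _ => Finset.mem_univ (cloud v))).symm
    have hFcard : ∀ c, (F c).card = Fintype.card B * Fintype.card Z := by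
      intro c
      by_contra hne
      have hlt : (F c).card < Fintype.card B * Fintype.card Z :=
        lt_of_le_of_ne (hFle c) hne
      have : ∑ c : C, (F c).card < ∑ _c : C, Fintype.card B * Fintype.card Z :=
        Finset.sum_lt_sum (fun i _ => hFle i) ⟨c, Finset.mem_univ c, hlt⟩
      rw [hFsum] at this
      simp only [Finset.sum_const, Finset.card_univ, smul_eq_mul] at this
      rw [mul_assoc] at this
      exact lt_irrefl _ this
    have hle2 : ∑ v ∈ Sstar, w v ≤ ∑ v ∈ Finset.univ.biUnion I, w v := by
      rw [Finset.sum_biUnion hdisj,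
        ← Finset.sum_fiberwise_of_maps_to (fun v _ => Finset.mem_univ (cloud v)) w]
      apply Finset.sum_le_sum
      intro c _
      refine hIopt c (F c) (hFind c) (hFcard c) ?_
      intro v hv
      have h1 := Finset.mem_filter.mp hv
      exact ⟨h1.2, Finset.mem_image_of_mem user hv⟩
    linarith
  exact ⟨hUind, hUcard, heq, fun T hT hTc => heq ▸ hopt T hT hTc⟩

end
end

section
/- Scheduling-level coordination reformulation: a subset S of C × U × B × Z of size |C|·|B|·|Z| is an independent set in the scheduling conflict graph (edges given by: same user different cloud; same (cloud, BS, PZ) triple; same user different BS) if and only if S is a feasible scheduling-level schedule: (i) each user connects to at most one base-station (across all clouds), and (ii) each (cloud, BS, PZ) triple is allocated to exactly one user. Hence the optimum of problem (10) equals the maximum weight of a size-|C||B||Z| independent set in the scheduling conflict graph. -/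
open Finset

section
variable {C U B Z : Type*} [Fintype C] [Fintype U] [Fintype B] [Fintype Z]

/-- Adjacency in the scheduling conflict graph: same user different cloud, or
same (cloud, BS, PZ) triple, or same user different BS. -/
def ConflictSch (v v' : C × U × B × Z) : Prop :=
  (user v = user v' ∧ cloud v ≠ cloud v')
  ∨ (cloud v = cloud v' ∧ bs v = bs v' ∧ pz v = pz v')
  ∨ (user v = user v' ∧ bs v ≠ bs v')

def IndepSetSch (S : Finset (C × U × B × Z)) : Prop :=
  ∀ v ∈ S, ∀ v' ∈ S, v ≠ v' → ¬ ConflictSch v v'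

/-- Feasibility for scheduling-level coordination: each user is served by at
most one (cloud, BS) pair, and each (cloud, BS, PZ) triple serves exactly one
user. -/
def FeasibleSch (S : Finset (C × U × B × Z)) : Prop :=
  (∀ a ∈ S, ∀ a' ∈ S, user a = user a' → cloud a = cloud a' ∧ bs a = bs a')
  ∧ (∀ c : C, ∀ b : B, ∀ z : Z, ∃! u : U, (c, u, b, z) ∈ S)

lemma feasSch_indepSch {S : Finset (C × U × B × Z)} (h : FeasibleSch S) :
    IndepSetSch S := by
  rintro v hv v' hv' hne (⟨hu, hc⟩ | ⟨hc, hb, hz⟩ | ⟨hu, hb⟩)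
  · exact hc (h.1 v hv v' hv' hu).1
  · obtain ⟨u, _, huniq⟩ := h.2 (cloud v) (bs v) (pz v)
    apply hne
    have e1 := huniq (user v) (show (cloud v, user v, bs v, pz v) ∈ S from hv)
    have e2 := huniq (user v')
      (by show (cloud v, user v', bs v, pz v) ∈ S; rw [hc, hb, hz]; exact hv')
    show (cloud v, user v, bs v, pz v) = (cloud v', user v', bs v', pz v')
    rw [e1, e2, hc, hb, hz]
  · exact hb (h.1 v hv v' hv' hu).2

lemma feasSch_card {S : Finset (C × U × B × Z)} (h : FeasibleSch S) :
    S.card = Fintype.card C * Fintype.card B * Fintype.card Z := by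
  classical
  have hinj : Set.InjOn (fun a : C × U × B × Z => (cloud a, bs a, pz a)) S := by
    intro a ha a' ha' he
    simp only [Prod.mk.injEq] at he
    obtain ⟨hc, hb, hz⟩ := he
    obtain ⟨u, _, huniq⟩ := h.2 (cloud a) (bs a) (pz a)
    have e1 := huniq (user a) (show (cloud a, user a, bs a, pz a) ∈ S from ha)
    have e2 := huniq (user a')
      (by show (cloud a, user a', bs a, pz a) ∈ S; rw [hc, hb, hz]; exact ha')
    show (cloud a, user a, bs a, pz a) = (cloud a', user a', bs a', pz a')
    rw [e1, e2, hc, hb, hz]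
  have hsurj : (univ : Finset (C × B × Z)) ⊆
      S.image (fun a => (cloud a, bs a, pz a)) := by
    rintro ⟨c, b, z⟩ _
    obtain ⟨u, hu, _⟩ := h.2 c b z
    exact mem_image.2 ⟨(c, u, b, z), hu, rfl⟩
  have himg : S.image (fun a => (cloud a, bs a, pz a)) = univ :=
    subset_antisymm (subset_univ _) hsurj
  calc S.card = (S.image (fun a => (cloud a, bs a, pz a))).card :=
        (Finset.card_image_of_injOn hinj).symm
    _ = Fintype.card C * Fintype.card B * Fintype.card Z := by
        rw [himg, card_univ]
        simp [Fintype.card_prod, mul_assoc]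

lemma indepSch_feasSch {S : Finset (C × U × B × Z)}
    (hcard : S.card = Fintype.card C * Fintype.card B * Fintype.card Z)
    (h : IndepSetSch S) : FeasibleSch S := by
  classical
  have hinj : Set.InjOn (fun a : C × U × B × Z => (cloud a, bs a, pz a)) S := by
    intro a ha a' ha' he
    simp only [Prod.mk.injEq] at he
    obtain ⟨hc, hb, hz⟩ := he
    by_contra hne
    exact h a ha a' ha' hne (Or.inr (Or.inl ⟨hc, hb, hz⟩))
  have himg : S.image (fun a => (cloud a, bs a, pz a)) = univ := by
    apply Finset.eq_univ_of_card
    rw [Finset.card_image_of_injOn hinj, hcard]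
    simp [Fintype.card_prod, mul_assoc]
  constructor
  · intro a ha a' ha' hu
    by_cases he : a = a'
    · rw [he]; exact ⟨rfl, rfl⟩
    · refine ⟨?_, ?_⟩
      · by_contra hc
        exact h a ha a' ha' he (Or.inl ⟨hu, hc⟩)
      · by_contra hb
        exact h a ha a' ha' he (Or.inr (Or.inr ⟨hu, hb⟩))
  · intro c b z
    have : (c, b, z) ∈ S.image (fun a => (cloud a, bs a, pz a)) := by
      rw [himg]; exact mem_univ _
    obtain ⟨a, ha, hga⟩ := mem_image.1 this
    simp only [Prod.mk.injEq] at hga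
    obtain ⟨hc, hb, hz⟩ := hga
    refine ⟨user a, ?_, ?_⟩
    · show (c, user a, b, z) ∈ S
      rw [← hc, ← hb, ← hz]; exact ha
    · intro u' hu'
      by_cases he : ((c, u', b, z) : C × U × B × Z) = a
      · rw [← he]; rfl
      · exfalso
        refine h (c, u', b, z) hu' a ha he (Or.inr (Or.inl ?_))
        exact ⟨hc.symm, hb.symm, hz.symm⟩

theorem scheduling_level_reformulation (π : C × U × B × Z → ℝ) :
    (∀ S : Finset (C × U × B × Z),
      S.card = Fintype.card C * Fintype.card B * Fintype.card Z →
      (IndepSetSch S ↔ FeasibleSch S))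
    ∧ (∀ m : ℝ,
      IsGreatest {x : ℝ | ∃ S : Finset (C × U × B × Z), FeasibleSch S ∧
        x = ∑ a ∈ S, π a} m ↔
      IsGreatest {x : ℝ | ∃ S : Finset (C × U × B × Z), IndepSetSch S ∧
        S.card = Fintype.card C * Fintype.card B * Fintype.card Z ∧
        x = ∑ a ∈ S, π a} m) := by
  refine ⟨fun S hcard => ⟨indepSch_feasSch hcard, feasSch_indepSch⟩, fun m => ?_⟩
  have hset : {x : ℝ | ∃ S : Finset (C × U × B × Z), FeasibleSch S ∧
      x = ∑ a ∈ S, π a} =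
      {x : ℝ | ∃ S : Finset (C × U × B × Z), IndepSetSch S ∧
        S.card = Fintype.card C * Fintype.card B * Fintype.card Z ∧
        x = ∑ a ∈ S, π a} := by
    ext x
    constructor
    · rintro ⟨S, hf, rfl⟩
      exact ⟨S, feasSch_indepSch hf, feasSch_card hf, rfl⟩
    · rintro ⟨S, hi, hc, rfl⟩
      exact ⟨S, indepSch_feasSch hc hi, rfl⟩
  rw [hset]

end
end

section
/- Exchange argument for the conflict resolution phase: let π* be the optimal value of the scheduling problem, u a user scheduled to cloud c* in an optimal solution, and suppose there exists another cloud c with π_{cu} + π̄_{c*u} ≥ π_{c*u} + π̄_{cu}, where π_{cu} (resp. π_{c*u}) is the local optimum of cloud c (resp. c*) when allowed to schedule u, and π̄_{cu} (resp. π̄_{c*u}) is the local optimum when forbidden to schedule u. Then there is a feasible schedule assigning u to cloud c with total weight at least π*; hence assigning u according to the arg-max rule of Algorithm 1 preserves optimality. -/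
open Finset

section
variable {C U B Z : Type*} [Fintype C] [Fintype U] [Fintype B] [Fintype Z]

/-- A local schedule of cloud `c` over the allowed user set `Uc`: an independent
set of size |B|·|Z| in the local conflict graph, all of whose vertices belong to
cloud `c` and use only users from `Uc`. -/
def LocalSched (c : C) (Uc : Finset U) (S : Finset (C × U × B × Z)) : Prop :=
  IndepSet S ∧ S.card = Fintype.card B * Fintype.card Z ∧
    ∀ v ∈ S, cloud v = c ∧ user v ∈ Uc

theorem exchange_argument [DecidableEq U]
    (w : C × U × B × Z → ℝ) (Sstar : Finset (C × U × B × Z))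
    (hind : IndepSet Sstar)
    (hcard : Sstar.card = Fintype.card C * Fintype.card B * Fintype.card Z)
    (hopt : ∀ S : Finset (C × U × B × Z), IndepSet S →
      S.card = Fintype.card C * Fintype.card B * Fintype.card Z →
      ∑ v ∈ S, w v ≤ ∑ v ∈ Sstar, w v)
    (Uc : C → Finset U) (u : U) (cstar c : C) (hcc : c ≠ cstar)
    -- the allowed user sets only overlap at the conflicting user u
    (hdisj : ∀ c₁ c₂ : C, c₁ ≠ c₂ → ∀ x ∈ Uc c₁, x ∈ Uc c₂ → x = u)
    -- invariant: the optimal schedule only uses allowed users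
    (hinv : ∀ v ∈ Sstar, user v ∈ Uc (cloud v))
    -- u is scheduled to cloud c* in the optimal solution
    (hu : ∃ v ∈ Sstar, user v = u ∧ cloud v = cstar)
    (πcu πcsu pibarcu pibarcsu : ℝ)
    -- local optima when u is scheduled
    (h1 : IsGreatest {x : ℝ | ∃ S, LocalSched c (Uc c) S ∧
      (∃ v ∈ S, user v = u) ∧ x = ∑ v ∈ S, w v} πcu)
    (h2 : IsGreatest {x : ℝ | ∃ S, LocalSched cstar (Uc cstar) S ∧
      (∃ v ∈ S, user v = u) ∧ x = ∑ v ∈ S, w v} πcsu)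
    -- local optima when u is forbidden
    (h3 : IsGreatest {x : ℝ | ∃ S, LocalSched c (Uc c \ {u}) S ∧
      x = ∑ v ∈ S, w v} pibarcu)
    (h4 : IsGreatest {x : ℝ | ∃ S, LocalSched cstar (Uc cstar \ {u}) S ∧
      x = ∑ v ∈ S, w v} pibarcsu)
    -- the exchange inequality of the arg-max rule
    (hex : πcsu + pibarcu ≤ πcu + pibarcsu) :
    ∃ S : Finset (C × U × B × Z), IndepSet S ∧
      S.card = Fintype.card C * Fintype.card B * Fintype.card Z ∧
      (∃ v ∈ S, user v = u ∧ cloud v = c) ∧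
      ∑ v ∈ Sstar, w v ≤ ∑ v ∈ S, w v := by
  classical
  obtain ⟨Sc, hSc, ⟨vc, hvcmem, hvcu⟩, hπcu⟩ := h1.1
  obtain ⟨Scs, hScs, hpibarcsu⟩ := h4.1
  obtain ⟨v0, hv0, hv0u, hv0c⟩ := hu
  -- users of Sstar outside cstar are not u
  have hu_ne : ∀ v ∈ Sstar, cloud v ≠ cstar → user v ≠ u := by
    intro v hv hvc hvu
    have hne : v ≠ v0 := fun h => hvc (h ▸ hv0c)
    exact hind v hv v0 hv0 hne (Or.inl ⟨hvu.trans hv0u.symm, by rw [hv0c]; exact hvc⟩)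
  set fc := Sstar.filter (fun v => cloud v = c) with hfc_def
  set fcs := Sstar.filter (fun v => cloud v = cstar) with hfcs_def
  set R := Sstar.filter (fun v => cloud v ≠ c ∧ cloud v ≠ cstar) with hR_def
  have hfib_le : ∀ c' : C, (Sstar.filter (fun v => cloud v = c')).card ≤
      Fintype.card B * Fintype.card Z := by
    intro c'
    have h := Finset.card_le_card_of_injOn (fun v => (bs v, pz v))
      (fun v _ => Finset.mem_univ ((bs v, pz v) : B × Z)) (s := Sstar.filter (fun v => cloud v = c')) ?_
    · simpa [Fintype.card_prod] using h
    · intro x hx y hy hxy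
      by_contra hne
      simp only [Finset.coe_filter, Set.mem_setOf_eq] at hx hy
      have h1 : bs x = bs y := congrArg Prod.fst hxy
      have h2 : pz x = pz y := congrArg Prod.snd hxy
      exact hind x hx.1 y hy.1 hne (Or.inr (Or.inl ⟨hx.2.trans hy.2.symm, h1, h2⟩))
  have hcard' : Sstar.card = Fintype.card C * (Fintype.card B * Fintype.card Z) := by
    rw [hcard, mul_assoc]
  have hsumfib : ∑ c' : C, (Sstar.filter (fun v => cloud v = c')).card = Sstar.card :=
    (Finset.card_eq_sum_card_fiberwise (fun v _ => Finset.mem_univ (cloud v))).symm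
  have hfib_eq : ∀ c' : C, (Sstar.filter (fun v => cloud v = c')).card =
      Fintype.card B * Fintype.card Z := by
    intro c'
    by_contra hne
    have hlt := lt_of_le_of_ne (hfib_le c') hne
    have hslt : ∑ c'' : C, (Sstar.filter (fun v => cloud v = c'')).card
        < ∑ _c'' : C, Fintype.card B * Fintype.card Z :=
      Finset.sum_lt_sum (fun i _ => hfib_le i) ⟨c', Finset.mem_univ c', hlt⟩
    rw [hsumfib, Finset.sum_const, smul_eq_mul, Finset.card_univ] at hslt
    exact absurd hcard' (ne_of_lt hslt)
  have hfc_card : fc.card = Fintype.card B * Fintype.card Z := by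
    rw [hfc_def]; exact hfib_eq c
  have hfcs_card : fcs.card = Fintype.card B * Fintype.card Z := by
    rw [hfcs_def]; exact hfib_eq cstar
  -- partition facts
  have hdfc : Disjoint fc fcs := by
    rw [Finset.disjoint_left]
    intro v hv1 hv2
    rw [hfc_def, Finset.mem_filter] at hv1
    rw [hfcs_def, Finset.mem_filter] at hv2
    exact hcc (hv1.2.symm.trans hv2.2)
  have hdfR : Disjoint (fc ∪ fcs) R := by
    rw [Finset.disjoint_left]
    intro v hv1 hv2
    rw [hR_def, Finset.mem_filter] at hv2
    rcases Finset.mem_union.mp hv1 with h | h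
    · exact hv2.2.1 (Finset.mem_filter.mp h).2
    · exact hv2.2.2 (Finset.mem_filter.mp h).2
  have hunion : Sstar = (fc ∪ fcs) ∪ R := by
    ext v
    simp only [hfc_def, hfcs_def, hR_def, Finset.mem_union, Finset.mem_filter]
    constructor
    · intro hv
      by_cases h1 : cloud v = c
      · exact Or.inl (Or.inl ⟨hv, h1⟩)
      · by_cases h2 : cloud v = cstar
        · exact Or.inl (Or.inr ⟨hv, h2⟩)
        · exact Or.inr ⟨hv, h1, h2⟩
    · rintro ((⟨hv, _⟩ | ⟨hv, _⟩) | ⟨hv, _⟩) <;> exact hv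
  -- basic facts about the pieces
  have hSc_cloud : ∀ v ∈ Sc, cloud v = c := fun v hv => (hSc.2.2 v hv).1
  have hSc_user : ∀ v ∈ Sc, user v ∈ Uc c := fun v hv => (hSc.2.2 v hv).2
  have hScs_cloud : ∀ v ∈ Scs, cloud v = cstar := fun v hv => (hScs.2.2 v hv).1
  have hScs_user : ∀ v ∈ Scs, user v ∈ Uc cstar ∧ user v ≠ u := by
    intro v hv
    have h := (hScs.2.2 v hv).2
    rw [Finset.mem_sdiff, Finset.mem_singleton] at h
    exact h
  have hR_mem : ∀ v ∈ R, v ∈ Sstar ∧ cloud v ≠ c ∧ cloud v ≠ cstar := by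
    intro v hv
    rw [hR_def, Finset.mem_filter] at hv
    exact hv
  -- users differ across the pieces
  have hRSc : ∀ v ∈ R, ∀ v' ∈ Sc, user v ≠ user v' := by
    intro v hv v' hv' heq
    obtain ⟨hvS, hvc, hvcs⟩ := hR_mem v hv
    have h1 : user v ∈ Uc c := by rw [heq]; exact hSc_user v' hv'
    have h2 : user v = u := hdisj (cloud v) c hvc _ (hinv v hvS) h1
    exact hu_ne v hvS hvcs h2
  have hRScs : ∀ v ∈ R, ∀ v' ∈ Scs, user v ≠ user v' := by
    intro v hv v' hv' heq
    obtain ⟨hvS, hvc, hvcs⟩ := hR_mem v hv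
    obtain ⟨h1, h2⟩ := hScs_user v' hv'
    have h1' : user v ∈ Uc cstar := by rw [heq]; exact h1
    have h3 : user v = u := hdisj (cloud v) cstar hvcs _ (hinv v hvS) h1'
    exact h2 (heq.symm.trans h3)
  have hScScs : ∀ v ∈ Sc, ∀ v' ∈ Scs, user v ≠ user v' := by
    intro v hv v' hv' heq
    obtain ⟨h1, h2⟩ := hScs_user v' hv'
    have h1' : user v ∈ Uc cstar := by rw [heq]; exact h1
    have h3 : user v = u := hdisj c cstar hcc _ (hSc_user v hv) h1'
    exact h2 (heq.symm.trans h3)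
  have hnoconf : ∀ v v' : C × U × B × Z, cloud v ≠ cloud v' → user v ≠ user v' →
      ¬ Conflict v v' := by
    rintro v v' hc hu' (⟨h, _⟩ | ⟨h, _, _⟩ | ⟨h, _⟩)
    exacts [hu' h, hc h, hu' h]
  -- independence of the exchanged schedule
  have hSind : IndepSet ((Sc ∪ Scs) ∪ R) := by
    intro v hv v' hv' hne
    rcases Finset.mem_union.mp hv with hvA | hvR
    · rcases Finset.mem_union.mp hvA with hvc1 | hvc2
      · rcases Finset.mem_union.mp hv' with hv'A | hv'R
        · rcases Finset.mem_union.mp hv'A with hv'c1 | hv'c2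
          · exact hSc.1 v hvc1 v' hv'c1 hne
          · exact hnoconf v v'
              (by rw [hSc_cloud v hvc1, hScs_cloud v' hv'c2]; exact hcc)
              (hScScs v hvc1 v' hv'c2)
        · exact hnoconf v v'
            (by rw [hSc_cloud v hvc1]; exact fun h => (hR_mem v' hv'R).2.1 h.symm)
            (hRSc v' hv'R v hvc1).symm
      · rcases Finset.mem_union.mp hv' with hv'A | hv'R
        · rcases Finset.mem_union.mp hv'A with hv'c1 | hv'c2
          · exact hnoconf v v'
              (by rw [hScs_cloud v hvc2, hSc_cloud v' hv'c1]; exact hcc.symm)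
              (hScScs v' hv'c1 v hvc2).symm
          · exact hScs.1 v hvc2 v' hv'c2 hne
        · exact hnoconf v v'
            (by rw [hScs_cloud v hvc2]; exact fun h => (hR_mem v' hv'R).2.2 h.symm)
            (hRScs v' hv'R v hvc2).symm
    · rcases Finset.mem_union.mp hv' with hv'A | hv'R
      · rcases Finset.mem_union.mp hv'A with hv'c1 | hv'c2
        · exact hnoconf v v'
            (by rw [hSc_cloud v' hv'c1]; exact (hR_mem v hvR).2.1)
            (hRSc v hvR v' hv'c1)
        · exact hnoconf v v'
            (by rw [hScs_cloud v' hv'c2]; exact (hR_mem v hvR).2.2)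
            (hRScs v hvR v' hv'c2)
      · exact hind v (hR_mem v hvR).1 v' (hR_mem v' hv'R).1 hne
  -- disjointness of the pieces
  have hdisjS1 : Disjoint Sc Scs := by
    rw [Finset.disjoint_left]; intro v hv1 hv2
    exact hcc ((hSc_cloud v hv1).symm.trans (hScs_cloud v hv2))
  have hdisjS2 : Disjoint (Sc ∪ Scs) R := by
    rw [Finset.disjoint_left]; intro v hv1 hv2
    rcases Finset.mem_union.mp hv1 with h | h
    · exact (hR_mem v hv2).2.1 (hSc_cloud v h)
    · exact (hR_mem v hv2).2.2 (hScs_cloud v h)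
  -- cardinality
  have hpart : Sstar.card = fc.card + fcs.card + R.card := by
    conv_lhs => rw [hunion]
    rw [Finset.card_union_of_disjoint hdfR, Finset.card_union_of_disjoint hdfc]
  have hScard : ((Sc ∪ Scs) ∪ R).card =
      Fintype.card C * Fintype.card B * Fintype.card Z := by
    rw [Finset.card_union_of_disjoint hdisjS2, Finset.card_union_of_disjoint hdisjS1,
      hSc.2.1, hScs.2.1, ← hcard, hpart, hfc_card, hfcs_card]
  -- the two fibers are local schedules
  have hfc_ls : LocalSched c (Uc c \ {u}) fc := by
    refine ⟨?_, hfc_card, ?_⟩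
    · intro v hv v' hv' hne
      rw [hfc_def, Finset.mem_filter] at hv hv'
      exact hind v hv.1 v' hv'.1 hne
    · intro v hv
      rw [hfc_def, Finset.mem_filter] at hv
      obtain ⟨hvS, hvc⟩ := hv
      refine ⟨hvc, Finset.mem_sdiff.mpr ⟨by rw [← hvc]; exact hinv v hvS, ?_⟩⟩
      rw [Finset.mem_singleton]
      exact hu_ne v hvS (by rw [hvc]; exact hcc)
  have hv0mem : v0 ∈ fcs := by
    rw [hfcs_def, Finset.mem_filter]; exact ⟨hv0, hv0c⟩
  have hfcs_ls : LocalSched cstar (Uc cstar) fcs := by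
    refine ⟨?_, hfcs_card, ?_⟩
    · intro v hv v' hv' hne
      rw [hfcs_def, Finset.mem_filter] at hv hv'
      exact hind v hv.1 v' hv'.1 hne
    · intro v hv
      rw [hfcs_def, Finset.mem_filter] at hv
      exact ⟨hv.2, by rw [← hv.2]; exact hinv v hv.1⟩
  -- sums
  have hsum_S : ∑ v ∈ (Sc ∪ Scs) ∪ R, w v
      = ∑ v ∈ Sc, w v + ∑ v ∈ Scs, w v + ∑ v ∈ R, w v := by
    rw [Finset.sum_union hdisjS2, Finset.sum_union hdisjS1]
  have hsum_star : ∑ v ∈ Sstar, w v = ∑ v ∈ fc, w v + ∑ v ∈ fcs, w v + ∑ v ∈ R, w v := by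
    conv_lhs => rw [hunion]
    rw [Finset.sum_union hdfR, Finset.sum_union hdfc]
  refine ⟨(Sc ∪ Scs) ∪ R, hSind, hScard,
    ⟨vc, Finset.mem_union_left _ (Finset.mem_union_left _ hvcmem), hvcu,
      hSc_cloud vc hvcmem⟩, ?_⟩
  have h5 : ∑ v ∈ fc, w v ≤ pibarcu := h3.2 ⟨fc, hfc_ls, rfl⟩
  have h6 : ∑ v ∈ fcs, w v ≤ πcsu := h2.2 ⟨fcs, hfcs_ls, ⟨v0, hv0mem, hv0u⟩, rfl⟩
  rw [hsum_star, hsum_S, ← hπcu, ← hpibarcsu]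
  linarith

end
end

section
/- Termination bound for Algorithm 1: in the distributed algorithm, at each iteration with a nonempty conflict set, at least one cloud removes a user from its allowed user set U_c, and each U_c is always a superset of the optimally-scheduled user set U_c^s, whose complement within U has size at most |U| − |B|. Hence the algorithm terminates within |C|·(|U| − |B|) iterations. -/
/-- Termination bound for the distributed conflict-resolution algorithm
(Algorithm 1). `Usets t c` is the allowed-user set of cloud `c` at iteration
`t` (initialized to all users), `done t` states that the conflict set is empty
at iteration `t`, and `Us c` is the set of users scheduled to cloud `c` in the
optimal solution (each of size at least `B`). Since every iteration with a
nonempty conflict set strictly shrinks some cloud's allowed set while the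
invariant `Us c ⊆ Usets t c` holds, the algorithm terminates within
`|C| * (|U| - B)` iterations. -/
theorem algorithm_terminates {C U : Type*} [Fintype C] [Fintype U]
    (B : ℕ) (Us : C → Finset U) (hUs : ∀ c : C, B ≤ (Us c).card)
    (Usets : ℕ → C → Finset U)
    (h0 : ∀ c : C, Usets 0 c = Finset.univ)
    (hmono : ∀ t : ℕ, ∀ c : C, Usets (t + 1) c ⊆ Usets t c)
    (hinv : ∀ t : ℕ, ∀ c : C, Us c ⊆ Usets t c)
    (done : ℕ → Prop)
    (hdec : ∀ t : ℕ, ¬ done t → ∃ c : C, Usets (t + 1) c ⊂ Usets t c) :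
    ∃ t : ℕ, t ≤ Fintype.card C * (Fintype.card U - B) ∧ done t := by
  by_contra h
  push_neg at h
  set N := Fintype.card C * (Fintype.card U - B) with hN
  have key : ∀ t, t ≤ N + 1 →
      (∑ c, (Usets t c).card) + t ≤ Fintype.card C * Fintype.card U := by
    intro t
    induction t with
    | zero =>
      intro _
      simp [h0, Finset.card_univ, mul_comm]
    | succ t ih =>
      intro ht
      have ht' : t ≤ N := Nat.lt_succ_iff.mp ht
      obtain ⟨c, hc⟩ := hdec t (h t ht')
      have hlt : ∑ c, (Usets (t + 1) c).card < ∑ c, (Usets t c).card :=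
        Finset.sum_lt_sum (fun i _ => Finset.card_le_card (hmono t i))
          ⟨c, Finset.mem_univ c, Finset.card_lt_card hc⟩
      have := ih (le_of_lt (Nat.lt_of_succ_le ht))
      omega
  have h1 := key (N + 1) le_rfl
  have h2 : Fintype.card C * B ≤ ∑ c, (Usets (N + 1) c).card := by
    calc Fintype.card C * B = ∑ _c : C, B := by simp [mul_comm]
    _ ≤ _ := Finset.sum_le_sum fun c _ =>
        (hUs c).trans (Finset.card_le_card (hinv (N + 1) c))
  rcases isEmpty_or_nonempty C with hC | ⟨⟨c⟩⟩
  · have hc0 : Fintype.card C = 0 := Fintype.card_eq_zero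
    rw [hc0, zero_mul] at h1
    omega
  · have hBU : B ≤ Fintype.card U :=
      (hUs c).trans ((Us c).card_le_univ.trans (by simp))
    have key2 : Fintype.card C * B + N = Fintype.card C * Fintype.card U := by
      rw [hN, ← Nat.mul_add, Nat.add_sub_cancel' hBU]
    omega
end
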